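/- In the polynomial ring ℚ[A,B,λ,μ] the following two identities hold, where c₄ = c₄(A,B), c₆ = c₆(A,B), D = D(A,B): (c₄³ − c₆²)·c₄(λB + μ·∂D/∂A, −18(λA − μ·∂D/∂B)) = −4·(36D)⁴·(λ⁴ − 6c₄λ²μ² − 8c₆λμ³ − 3c₄²μ⁴), and (c₄³ − c₆²)²·c₆(λB + μ·∂D/∂A, −18(λA − μ·∂D/∂B)) = −8·(36D)⁶·(c₆λ⁶ + 6c₄²λ⁵μ + 15c₄c₆λ⁴μ² + 20c₆²λ³μ³ + 15c₄²c₆λ²μ⁴ + 6(3c₄⁴ − 2c₄c₆²)λμ⁵ + (9c₄³c₆ − 8c₆³)μ⁶). (This is the cleared-denominator form of the paper's formulae 𝐜₄*(λ,μ) = −4(λ⁴ − 6c₄λ²μ² − 8c₆λμ³ − 3c₄²μ⁴)/(c₄³−c₆²) and 𝐜₆*(λ,μ) = −8𝐜₆(λ,μ)/(c₄³−c₆²)² for the family of elliptic curves parametrised by Y_E⁻(3).) -/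

import Mathlib

open MvPolynomial

noncomputable section

/-- The polynomial ring ℚ[A,B,λ,μ]. -/
abbrev R2 : Type := MvPolynomial (Fin 4) ℚ

/-- The binary form D(X,Y) = −27X⁴ − XY³. -/
def Dbin (A B : R2) : R2 := -27 * A ^ 4 - A * B ^ 3
/-- The binary form c₄(X,Y) = −216X³Y + Y⁴. -/
def c4bin (A B : R2) : R2 := -216 * A ^ 3 * B + B ^ 4
/-- The binary form c₆(X,Y) = 5832X⁶ − 540X³Y³ − Y⁶. -/
def c6bin (A B : R2) : R2 := 5832 * A ^ 6 - 540 * A ^ 3 * B ^ 3 - B ^ 6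
/-- ∂D/∂A = −108A³ − B³. -/
def dDdA (A B : R2) : R2 := -108 * A ^ 3 - B ^ 3
/-- ∂D/∂B = −3AB². -/
def dDdB (A B : R2) : R2 := -3 * A * B ^ 2

/-! Both identities are the syzygy `c₄³ − c₆² = 1728 D³` combined with the evaluations of `c₄` and
`c₆` at `(λB + μ ∂D/∂A, −18(λA − μ ∂D/∂B))`: the first is `D` times a quartic in `λ, μ`, the second
is a sextic in `λ, μ` alone, with constants `−3888 = −4 · 36⁴ / 1728` and
`−5832 = −8 · 36⁶ / 1728²`. -/

theorem c4bin_cube_sub_c6bin_sq (A B : R2) :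
    c4bin A B ^ 3 - c6bin A B ^ 2 = 1728 * Dbin A B ^ 3 := by
  simp only [c4bin, c6bin, Dbin]
  ring

theorem c4bin_substitution (A B l m : R2) :
    c4bin (l * B + m * dDdA A B) (-18 * (l * A - m * dDdB A B)) =
      -3888 * Dbin A B *
        (l ^ 4 - 6 * c4bin A B * l ^ 2 * m ^ 2 - 8 * c6bin A B * l * m ^ 3
          - 3 * c4bin A B ^ 2 * m ^ 4) := by
  simp only [c4bin, c6bin, Dbin, dDdA, dDdB]
  ring

theorem c6bin_substitution (A B l m : R2) :
    c6bin (l * B + m * dDdA A B) (-18 * (l * A - m * dDdB A B)) =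
      -5832 *
        (c6bin A B * l ^ 6 + 6 * c4bin A B ^ 2 * l ^ 5 * m
          + 15 * c4bin A B * c6bin A B * l ^ 4 * m ^ 2 + 20 * c6bin A B ^ 2 * l ^ 3 * m ^ 3
          + 15 * c4bin A B ^ 2 * c6bin A B * l ^ 2 * m ^ 4
          + 6 * (3 * c4bin A B ^ 4 - 2 * c4bin A B * c6bin A B ^ 2) * l * m ^ 5
          + (9 * c4bin A B ^ 3 * c6bin A B - 8 * c6bin A B ^ 3) * m ^ 6) := by
  simp only [c4bin, c6bin, dDdA, dDdB]
  ring

/-- The cleared-denominator form of the formulae for 𝐜₄*(λ,μ) and 𝐜₆*(λ,μ)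
describing the family of elliptic curves parametrised by Y_E⁻(3). -/
theorem stmt2 :
    ((c4bin (X 0) (X 1) ^ 3 - c6bin (X 0) (X 1) ^ 2) *
        c4bin (X 2 * X 1 + X 3 * dDdA (X 0) (X 1))
          (-18 * (X 2 * X 0 - X 3 * dDdB (X 0) (X 1))) =
      -4 * (36 * Dbin (X 0) (X 1)) ^ 4 *
        (X 2 ^ 4 - 6 * c4bin (X 0) (X 1) * X 2 ^ 2 * X 3 ^ 2
          - 8 * c6bin (X 0) (X 1) * X 2 * X 3 ^ 3
          - 3 * c4bin (X 0) (X 1) ^ 2 * X 3 ^ 4))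
    ∧
    ((c4bin (X 0) (X 1) ^ 3 - c6bin (X 0) (X 1) ^ 2) ^ 2 *
        c6bin (X 2 * X 1 + X 3 * dDdA (X 0) (X 1))
          (-18 * (X 2 * X 0 - X 3 * dDdB (X 0) (X 1))) =
      -8 * (36 * Dbin (X 0) (X 1)) ^ 6 *
        (c6bin (X 0) (X 1) * X 2 ^ 6
          + 6 * c4bin (X 0) (X 1) ^ 2 * X 2 ^ 5 * X 3
          + 15 * c4bin (X 0) (X 1) * c6bin (X 0) (X 1) * X 2 ^ 4 * X 3 ^ 2
          + 20 * c6bin (X 0) (X 1) ^ 2 * X 2 ^ 3 * X 3 ^ 3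
          + 15 * c4bin (X 0) (X 1) ^ 2 * c6bin (X 0) (X 1) * X 2 ^ 2 * X 3 ^ 4
          + 6 * (3 * c4bin (X 0) (X 1) ^ 4
              - 2 * c4bin (X 0) (X 1) * c6bin (X 0) (X 1) ^ 2) * X 2 * X 3 ^ 5
          + (9 * c4bin (X 0) (X 1) ^ 3 * c6bin (X 0) (X 1)
              - 8 * c6bin (X 0) (X 1) ^ 3) * X 3 ^ 6)) := by
  rw [c4bin_cube_sub_c6bin_sq, c4bin_substitution, c6bin_substitution]
  constructor <;> ring

end
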